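/- Let (M,d) be an ultrametric space, let A, B be nonempty spherically complete subsets of M with δ(B) ≤ dist(A,B), and let F : A ∪ B → A ∪ B be a noncyclic nonexpansive mapping such that for every x ∈ A ∪ B with x ≠ F(x) one has liminf_{n→∞} d(Fⁿ(x), Fⁿ⁺¹(x)) < d(x, F(x)). Then there exist a ∈ A and b ∈ B such that F(a) = a, F(b) = b and d(a,b) = dist(A,B). -/

import Mathlib

open Metric

variable {M : Type*} [MetricSpace M]

/-- A subset `A` of a metric space is *spherically complete* (as a subspace) if every nested
decreasing sequence of closed balls of the subspace `A` has nonempty intersection. -/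
def SphericallyCompleteSet (A : Set M) : Prop :=
  ∀ (c : ℕ → M) (r : ℕ → ℝ), (∀ n, c n ∈ A) → (∀ n, 0 ≤ r n) →
    (∀ n, A ∩ closedBall (c (n + 1)) (r (n + 1)) ⊆ A ∩ closedBall (c n) (r n)) →
    (A ∩ ⋂ n, closedBall (c n) (r n)).Nonempty

/-- A metric space is *spherically complete* if every nested decreasing sequence of closed
balls has nonempty intersection. -/
def SphericallyCompleteSpace (M : Type*) [MetricSpace M] : Prop :=
  ∀ (c : ℕ → M) (r : ℕ → ℝ), (∀ n, 0 ≤ r n) →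
    (∀ n, closedBall (c (n + 1)) (r (n + 1)) ⊆ closedBall (c n) (r n)) →
    (⋂ n, closedBall (c n) (r n)).Nonempty

/-- `dist(A, B) = inf {d(a,b) : a ∈ A, b ∈ B}`. -/
noncomputable def setDist (A B : Set M) : ℝ :=
  sInf {t : ℝ | ∃ a ∈ A, ∃ b ∈ B, dist a b = t}

/-- A subset `A` is *proximinal* if every point of `M` has a best approximation in `A`. -/
def IsProximinal (A : Set M) : Prop :=
  ∀ x : M, ∃ a ∈ A, dist x a = infDist x A

/-- `A₀ = {x ∈ A : d(x,y) = dist(A,B) for some y ∈ B}`. -/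
noncomputable def proxA (A B : Set M) : Set M :=
  {x ∈ A | ∃ y ∈ B, dist x y = setDist A B}

/-- `B₀ = {y ∈ B : d(x,y) = dist(A,B) for some x ∈ A}`. -/
noncomputable def proxB (A B : Set M) : Set M :=
  {y ∈ B | ∃ x ∈ A, dist x y = setDist A B}

/-- The closed ball `B(c,r)`, `r > 0`, is a *minimal `F`-invariant ball* if `F(B) ⊆ B`
and `d(y, F(y)) = r` for each `y ∈ B`. -/
def IsMinimalInvariantBall (F : M → M) (c : M) (r : ℝ) : Prop :=
  0 < r ∧ Set.MapsTo F (closedBall c r) (closedBall c r) ∧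
    ∀ y ∈ closedBall c r, dist y (F y) = r

/-!
Pick a fixed point `b ∈ B` first. Since `δ(B) ≤ dist(A,B)`, the ultrametric inequality makes `b`
a nearest point of `B` to every point of `A`, and spherical completeness makes `A` proximinal, so
`A ∩ closedBall b (dist(A,B))` is nonempty; it is again spherically complete and `F`-invariant, and
a fixed point there is a best proximity point.

Fixed points come from nested balls `closedBall x (dist x (F x))`: in an ultrametric space such a
ball is `F`-invariant on the domain and contains the balls of its points. Choosing each centre to
nearly minimise the displacement over the previous ball, a point `z` of the intersection has an
orbit along which the displacement never drops below `dist z (F z)`, which the `liminf` condition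
forbids unless `F z = z`.
-/

open Metric Filter Set Function

lemma exists_seq_of_forall_mem_exists {α : Type*} {D : Set α} {R : ℕ → α → α → Prop}
    (h : ∀ n, ∀ x ∈ D, ∃ y ∈ D, R n x y) {x₀ : α} (hx₀ : x₀ ∈ D) :
    ∃ c : ℕ → α, (∀ n, c n ∈ D) ∧ ∀ n, R n (c n) (c (n + 1)) := by
  choose! g hgD hgR using h
  let c : ℕ → α := fun n => Nat.rec x₀ g n
  have hcD : ∀ n, c n ∈ D := by
    intro n
    induction n with
    | zero => exact hx₀
    | succ n ih => exact hgD n _ ih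
  exact ⟨c, hcD, fun n => hgR n _ (hcD n)⟩

lemma exists_forall_lt_add_of_bddBelow {α : Type*} {S : Set α} (hS : S.Nonempty) {f : α → ℝ}
    (hf : BddBelow (f '' S)) {ε : ℝ} (hε : 0 < ε) : ∃ y ∈ S, ∀ w ∈ S, f y < f w + ε := by
  obtain ⟨_, ⟨y, hy, rfl⟩, hlt⟩ := Real.lt_sInf_add_pos (hS.image f) hε
  exact ⟨y, hy, fun w hw => hlt.trans_le (by gcongr; exact csInf_le hf (mem_image_of_mem f hw))⟩

lemma le_of_forall_le_add_one_div {a b : ℝ} (h : ∀ n : ℕ, a ≤ b + 1 / (n + 1)) : a ≤ b :=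
  ge_of_tendsto' (by simpa using tendsto_one_div_add_atTop_nhds_zero_nat.const_add b) h

lemma setDist_le_dist {A B : Set M} {a b : M} (ha : a ∈ A) (hb : b ∈ B) :
    setDist A B ≤ dist a b :=
  csInf_le ⟨0, by rintro _ ⟨_, -, _, -, rfl⟩; exact dist_nonneg⟩ ⟨a, ha, b, hb, rfl⟩

lemma le_setDist {A B : Set M} (hA : A.Nonempty) (hB : B.Nonempty) {t : ℝ}
    (h : ∀ a ∈ A, ∀ b ∈ B, t ≤ dist a b) : t ≤ setDist A B := by
  obtain ⟨a, ha⟩ := hA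
  obtain ⟨b, hb⟩ := hB
  exact le_csInf ⟨_, a, ha, b, hb, rfl⟩ (by rintro _ ⟨a, ha, b, hb, rfl⟩; exact h a ha b hb)

namespace SphericallyCompleteSet

variable {A : Set M}

lemma inter_iInter_closedBall_nonempty (hA : SphericallyCompleteSet A) {c : ℕ → M} {r : ℕ → ℝ}
    (hc : ∀ n, c n ∈ A) (hr : ∀ n, 0 ≤ r n)
    (hnest : ∀ n, closedBall (c (n + 1)) (r (n + 1)) ⊆ closedBall (c n) (r n)) :
    (A ∩ ⋂ n, closedBall (c n) (r n)).Nonempty :=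
  hA c r hc hr fun n => inter_subset_inter_right A (hnest n)

variable [IsUltrametricDist M]

lemma inter_closedBall (hA : SphericallyCompleteSet A) (b : M) (ρ : ℝ) :
    SphericallyCompleteSet (A ∩ closedBall b ρ) := by
  intro c r hc hr hnest
  have hρ : 0 ≤ ρ := nonempty_closedBall.mp ⟨c 0, (hc 0).2⟩
  -- `closedBall b ρ = closedBall (c n) ρ`, so cutting the radius down to `ρ` intersects with it
  have hcut : ∀ n, A ∩ closedBall (c n) (min (r n) ρ) =
      (A ∩ closedBall b ρ) ∩ closedBall (c n) (r n) := by
    intro n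
    rw [IsUltrametricDist.closedBall_eq_of_mem (hc n).2]
    ext
    simp only [mem_inter_iff, mem_closedBall, le_min_iff]
    tauto
  obtain ⟨z, hzA, hz⟩ := hA c (fun n => min (r n) ρ) (fun n => (hc n).1)
    (fun n => le_min (hr n) hρ) (fun n => by rw [hcut, hcut]; exact hnest n)
  have hzn : ∀ n, z ∈ (A ∩ closedBall b ρ) ∩ closedBall (c n) (r n) := fun n =>
    hcut n ▸ ⟨hzA, mem_iInter.mp hz n⟩
  exact ⟨z, (hzn 0).1, mem_iInter.mpr fun n => (hzn n).2⟩

lemma isProximinal (hA : SphericallyCompleteSet A) (hne : A.Nonempty) : IsProximinal A := by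
  intro x
  set ε : ℕ → ℝ := fun n => infDist x A + 1 / (n + 1)
  have happrox : ∀ n, ∃ a ∈ A, dist x a < ε n := fun n =>
    (infDist_lt_iff hne).mp (lt_add_of_pos_right _ Nat.one_div_pos_of_nat)
  choose a haA hax using happrox
  have hball : ∀ n, closedBall (a n) (ε n) = closedBall x (ε n) := fun n =>
    (IsUltrametricDist.closedBall_eq_of_mem (mem_closedBall'.mpr (hax n).le)).symm
  have hε : Antitone ε := fun m n hmn => by
    simp only [ε]
    gcongr
  obtain ⟨z, hzA, hz⟩ := hA.inter_iInter_closedBall_nonempty haA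
    (fun n => dist_nonneg.trans (hax n).le)
    (fun n => by rw [hball, hball]; exact closedBall_subset_closedBall (hε n.le_succ))
  refine ⟨z, hzA, le_antisymm (le_of_forall_le_add_one_div fun n => ?_)
    (infDist_le_dist_of_mem hzA)⟩
  have hzn := mem_iInter.mp hz n
  rw [hball, mem_closedBall'] at hzn
  exact hzn

end SphericallyCompleteSet

lemma antitone_dist_iterate_succ {D : Set M} {F : M → M} (hFD : MapsTo F D D)
    (hF : ∀ x ∈ D, ∀ y ∈ D, dist (F x) (F y) ≤ dist x y) {z : M} (hz : z ∈ D) :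
    Antitone fun k => dist (F^[k] z) (F^[k + 1] z) :=
  antitone_nat_of_succ_le fun k => by
    rw [iterate_succ_apply' F (k + 1), iterate_succ_apply' F k]
    exact hF _ (hFD.iterate k hz) _ (hFD (hFD.iterate k hz))

section Displacement

variable [IsUltrametricDist M] {D : Set M} {F : M → M} {x y : M}

lemma dist_map_le_of_mem_closedBall_dist_map
    (hF : ∀ x ∈ D, ∀ y ∈ D, dist (F x) (F y) ≤ dist x y) (hx : x ∈ D) (hy : y ∈ D)
    (hyx : y ∈ closedBall x (dist x (F x))) : dist (F y) x ≤ dist x (F x) :=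
  (dist_triangle_max (F y) (F x) x).trans
    (max_le ((hF y hy x hx).trans hyx) (dist_comm x (F x) ▸ le_rfl))

lemma dist_map_self_le_of_mem_closedBall_dist_map
    (hF : ∀ x ∈ D, ∀ y ∈ D, dist (F x) (F y) ≤ dist x y) (hx : x ∈ D) (hy : y ∈ D)
    (hyx : y ∈ closedBall x (dist x (F x))) : dist y (F y) ≤ dist x (F x) :=
  (dist_triangle_max y x (F y)).trans (max_le hyx
    (dist_comm (F y) x ▸ dist_map_le_of_mem_closedBall_dist_map hF hx hy hyx))

lemma mapsTo_inter_closedBall_dist_map (hFD : MapsTo F D D)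
    (hF : ∀ x ∈ D, ∀ y ∈ D, dist (F x) (F y) ≤ dist x y) (hx : x ∈ D) :
    MapsTo F (D ∩ closedBall x (dist x (F x))) (D ∩ closedBall x (dist x (F x))) :=
  fun _ hy => ⟨hFD hy.1, dist_map_le_of_mem_closedBall_dist_map hF hx hy.1 hy.2⟩

lemma closedBall_dist_map_subset (hF : ∀ x ∈ D, ∀ y ∈ D, dist (F x) (F y) ≤ dist x y)
    (hx : x ∈ D) (hy : y ∈ D) (hyx : y ∈ closedBall x (dist x (F x))) :
    closedBall y (dist y (F y)) ⊆ closedBall x (dist x (F x)) :=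
  (closedBall_subset_closedBall (dist_map_self_le_of_mem_closedBall_dist_map hF hx hy hyx)).trans
    (IsUltrametricDist.closedBall_eq_of_mem hyx).symm.subset

theorem SphericallyCompleteSet.exists_fixedPoint
    (hD : SphericallyCompleteSet D) (hne : D.Nonempty) (hFD : MapsTo F D D)
    (hF : ∀ x ∈ D, ∀ y ∈ D, dist (F x) (F y) ≤ dist x y)
    (hliminf : ∀ x ∈ D, x ≠ F x →
      liminf (fun n : ℕ => dist (F^[n] x) (F^[n + 1] x)) atTop < dist x (F x)) :
    ∃ z ∈ D, F z = z := by
  have hstep : ∀ n : ℕ, ∀ x ∈ D, ∃ y ∈ D, y ∈ closedBall x (dist x (F x)) ∧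
      ∀ w ∈ D ∩ closedBall x (dist x (F x)), dist y (F y) < dist w (F w) + 1 / (n + 1) := by
    intro n x hx
    obtain ⟨y, ⟨hyD, hyx⟩, hy⟩ := exists_forall_lt_add_of_bddBelow
      (S := D ∩ closedBall x (dist x (F x))) (f := fun y => dist y (F y))
      ⟨x, hx, mem_closedBall_self dist_nonneg⟩ ⟨0, forall_mem_image.2 fun _ _ => dist_nonneg⟩
      (Nat.one_div_pos_of_nat (n := n))
    exact ⟨y, hyD, hyx, hy⟩
  obtain ⟨c, hcD, hc⟩ := exists_seq_of_forall_mem_exists hstep hne.some_mem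
  obtain ⟨z, hzD, hz⟩ := hD.inter_iInter_closedBall_nonempty
    (r := fun n => dist (c n) (F (c n))) hcD (fun n => dist_nonneg)
    fun n => closedBall_dist_map_subset hF (hcD n) (hcD (n + 1)) (hc n).1
  have hzc : ∀ n, z ∈ D ∩ closedBall (c n) (dist (c n) (F (c n))) := fun n =>
    ⟨hzD, mem_iInter.mp hz n⟩
  -- the orbit of `z` stays in every ball, where the displacement is almost at least that of `z`
  have hconst : ∀ k, dist (F^[k] z) (F^[k + 1] z) = dist z (F z) := by
    intro k
    refine le_antisymm (antitone_dist_iterate_succ hFD hF hzD (Nat.zero_le k))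
      (le_of_forall_le_add_one_div fun n => ?_)
    have horbit := (mapsTo_inter_closedBall_dist_map hFD hF (hcD n)).iterate k (hzc n)
    calc dist z (F z) ≤ dist (c (n + 1)) (F (c (n + 1))) :=
          dist_map_self_le_of_mem_closedBall_dist_map hF (hcD (n + 1)) hzD (hzc (n + 1)).2
      _ ≤ dist (F^[k] z) (F^[k + 1] z) + 1 / (n + 1) := by
          rw [iterate_succ_apply']
          exact ((hc n).2 _ horbit).le
  refine ⟨z, hzD, by_contra fun hfix => ?_⟩
  have hlt := hliminf z hzD (Ne.symm hfix)
  simp only [hconst, liminf_const, lt_self_iff_false] at hlt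

end Displacement

open Filter in
/-- **Theorem 2.10.** Let `A, B` be nonempty spherically complete subsets of an ultrametric
space with `δ(B) ≤ dist(A,B)`, and let `F : A ∪ B → A ∪ B` be a noncyclic nonexpansive
mapping with `liminf_{n→∞} d(Fⁿ x, Fⁿ⁺¹ x) < d(x, F x)` whenever `x ∈ A ∪ B`, `x ≠ F x`.
Then there are `a ∈ A` and `b ∈ B` with `F a = a`, `F b = b` and `d(a,b) = dist(A,B)`. -/
theorem fixedPoints_bestProximity {M : Type*} [MetricSpace M] [IsUltrametricDist M]
    (A B : Set M) (hA : A.Nonempty) (hB : B.Nonempty)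
    (hAsc : SphericallyCompleteSet A) (hBsc : SphericallyCompleteSet B)
    (hδ : ∀ x ∈ B, ∀ y ∈ B, dist x y ≤ setDist A B)
    (F : M → M) (hFA : Set.MapsTo F A A) (hFB : Set.MapsTo F B B)
    (hF : ∀ x ∈ A ∪ B, ∀ y ∈ A ∪ B, dist (F x) (F y) ≤ dist x y)
    (hliminf : ∀ x ∈ A ∪ B, x ≠ F x →
      liminf (fun n : ℕ => dist (F^[n] x) (F^[n + 1] x)) atTop < dist x (F x)) :
    ∃ a ∈ A, ∃ b ∈ B, F a = a ∧ F b = b ∧ dist a b = setDist A B := by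
  obtain ⟨b, hbB, hFb⟩ := hBsc.exists_fixedPoint hB hFB
    (fun x hx y hy => hF x (.inr hx) y (.inr hy)) (fun x hx => hliminf x (.inr hx))
  set ρ := setDist A B
  have hb_nearest : ∀ a ∈ A, ∀ b' ∈ B, dist a b ≤ dist a b' := fun a ha b' hb' =>
    (dist_triangle_max a b' b).trans
      (max_le le_rfl ((hδ b' hb' b hbB).trans (setDist_le_dist ha hb')))
  obtain ⟨a₀, ha₀A, ha₀⟩ := hAsc.isProximinal hA b
  have ha₀b : dist a₀ b ≤ ρ := le_setDist hA hB fun a ha b' hb' => by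
    rw [dist_comm, ha₀]
    exact (infDist_le_dist_of_mem ha).trans (dist_comm b a ▸ hb_nearest a ha b' hb')
  have hFD : MapsTo F (A ∩ closedBall b ρ) (A ∩ closedBall b ρ) := fun x hx =>
    ⟨hFA hx.1, calc dist (F x) b = dist (F x) (F b) := by rw [hFb]
      _ ≤ ρ := (hF x (.inl hx.1) b (.inr hbB)).trans hx.2⟩
  obtain ⟨a, ⟨haA, hab⟩, hFa⟩ := (hAsc.inter_closedBall b ρ).exists_fixedPoint
    ⟨a₀, ha₀A, ha₀b⟩ hFD (fun x hx y hy => hF x (.inl hx.1) y (.inl hy.1))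
    (fun x hx => hliminf x (.inl hx.1))
  exact ⟨a, haA, b, hbB, hFa, hFb, le_antisymm hab (setDist_le_dist haA hbB)⟩
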